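/- Let n be a positive integer, let λ ∈ [0,1], and let X be a real symmetric n×n positive semidefinite matrix with all diagonal entries equal to 1. Then the matrix f_λ(X) + (1 − sin(πλ/2))·I is positive semidefinite, where f_λ(X) is the matrix with (i,j) entry sin(λ·arcsin(X_{ij})) and I is the n×n identity matrix. -/

import Mathlib

/-!
The Taylor coefficients `b n` of `x ↦ sin (λ arcsin x)` are nonnegative for `0 ≤ λ ≤ 1`: the ODE
`(1 - x²) y'' - x y' + λ² y = 0` gives `b (n + 2) (n + 2) (n + 1) = b n (n² - λ²)`, with `b 0 = 0`
and `b 1 = λ`. So when all entries of `X` lie in `(-1, 1)`, `f_λ(X) = ∑ b n • X^{∘n}` is a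
convergent sum of positive semidefinite matrices (Schur product theorem). Entries `±1` are handled
by letting `t → 1⁻` in `f_λ(t • X)`, as positive semidefinite matrices form a closed set. Since
`sin (π λ / 2) ≤ 1`, adding `(1 - sin (π λ / 2)) • 1` keeps the matrix positive semidefinite.

The power series is identified with `sin (λ arcsin x)` through the ODE: after substituting
`x = sin θ`, the difference `u` of the two satisfies `u'' = -λ² u` and `u 0 = u' 0 = 0`, so the
energy `u'² + λ² u²` vanishes.
-/

open Filter Topology Set Real
open scoped ComplexOrder

namespace Matrix

variable {n : Type*}

theorem isClosed_setOf_posSemidef {R : Type*} [Ring R] [PartialOrder R] [StarRing R]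
    [TopologicalSpace R] [IsTopologicalRing R] [ContinuousStar R] [T2Space R]
    [ClosedIciTopology R] : IsClosed {A : Matrix n n R | A.PosSemidef} := by
  have hherm : IsClosed {A : Matrix n n R | A.IsHermitian} :=
    isClosed_eq continuous_id.matrix_conjTranspose continuous_id
  have hform : ∀ x : n →₀ R, IsClosed {A : Matrix n n R |
      0 ≤ x.sum fun i xi ↦ x.sum fun j xj ↦ star xi * A i j * xj} := fun x ↦
    isClosed_Ici.preimage (by simp only [Finsupp.sum]; fun_prop)
  simpa only [PosSemidef, ofPred_and, ofPred_forall] using hherm.inter (isClosed_iInter hform)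

theorem posSemidef_of_hasSum {R : Type*} [Ring R] [PartialOrder R] [StarRing R]
    [TopologicalSpace R] [IsTopologicalRing R] [ContinuousStar R] [T2Space R]
    [ClosedIciTopology R] [AddLeftMono R] {ι : Type*} {A : ι → Matrix n n R} {S : Matrix n n R}
    (hA : ∀ k, (A k).PosSemidef) (hS : HasSum A S) : S.PosSemidef :=
  isClosed_setOf_posSemidef.mem_of_tendsto hS <|
    Eventually.of_forall fun s ↦ posSemidef_sum s fun k _ ↦ hA k

theorem PosSemidef.sq_apply_le_mul {A : Matrix n n ℝ} (hA : A.PosSemidef) (i j : n) :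
    A i j ^ 2 ≤ A i i * A j j := by
  have hdet := (hA.submatrix ![i, j]).det_nonneg
  have hsymm : A j i = A i j := by simpa using hA.isHermitian.apply i j
  simp only [det_fin_two, submatrix_apply, cons_val_zero, cons_val_one, hsymm] at hdet
  nlinarith

theorem PosSemidef.map_pow [Fintype n] {𝕜 : Type*} [RCLike 𝕜] {A : Matrix n n 𝕜}
    (hA : A.PosSemidef) : ∀ k : ℕ, (A.map (· ^ k)).PosSemidef
  | 0 => by
    convert posSemidef_vecMulVec_self_star (1 : n → 𝕜) using 1
    ext i j
    simp [vecMulVec]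
  | k + 1 => by
    convert (hA.map_pow k).hadamard hA using 1
    ext i j
    simp [pow_succ]

theorem PosSemidef.map_of_hasSum [Fintype n] {A : Matrix n n ℝ} (hA : A.PosSemidef)
    {f : ℝ → ℝ} {b : ℕ → ℝ} (hb : ∀ k, 0 ≤ b k)
    (hf : ∀ i j, HasSum (fun k ↦ b k * A i j ^ k) (f (A i j))) : (A.map f).PosSemidef :=
  posSemidef_of_hasSum (fun k ↦ (hA.map_pow k).smul (hb k))
    (Pi.hasSum.2 fun i ↦ Pi.hasSum.2 fun j ↦ by simpa using hf i j)

theorem PosSemidef.map_of_hasSum_of_continuousOn [Fintype n] {A : Matrix n n ℝ}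
    (hA : A.PosSemidef) (hA₁ : ∀ i j, |A i j| ≤ 1) {f : ℝ → ℝ} {b : ℕ → ℝ}
    (hb : ∀ k, 0 ≤ b k) (hf : ∀ x, |x| < 1 → HasSum (fun k ↦ b k * x ^ k) (f x))
    (hfc : ContinuousOn f (Icc (-1) 1)) : (A.map f).PosSemidef := by
  have hscaled : ∀ t ∈ Ioo (0 : ℝ) 1, ∀ i j, |t * A i j| < 1 := fun t ht i j ↦ by
    rw [abs_mul, abs_of_pos ht.1]
    nlinarith [hA₁ i j, ht.1, ht.2]
  have hlim : Tendsto (fun t : ℝ ↦ (t • A).map f) (𝓝[<] 1) (𝓝 (A.map f)) := by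
    refine tendsto_pi_nhds.2 fun i ↦ tendsto_pi_nhds.2 fun j ↦ ?_
    have hscale : Tendsto (fun t : ℝ ↦ t * A i j) (𝓝[<] 1) (𝓝[Icc (-1) 1] (A i j)) := by
      refine tendsto_nhdsWithin_iff.2 ⟨?_, ?_⟩
      · exact ((continuous_mul_const (A i j)).tendsto' 1 _ (one_mul _)).mono_left
          nhdsWithin_le_nhds
      · filter_upwards [Ioo_mem_nhdsLT zero_lt_one] with t ht
        exact abs_le.1 (hscaled t ht i j).le
    exact (hfc _ (abs_le.1 (hA₁ i j))).tendsto.comp hscale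
  refine isClosed_setOf_posSemidef.mem_of_tendsto hlim ?_
  filter_upwards [Ioo_mem_nhdsLT zero_lt_one] with t ht
  exact (hA.smul ht.1.le).map_of_hasSum hb fun i j ↦ hf _ (hscaled t ht i j)

end Matrix

theorem eqOn_zero_of_hasDerivAt_of_hasDerivAt_neg_sq_mul {s : Set ℝ} (hs : IsOpen s)
    (hs' : IsPreconnected s) {ω : ℝ} (hω : ω ≠ 0) {u v : ℝ → ℝ}
    (hu : ∀ t ∈ s, HasDerivAt u (v t) t) (hv : ∀ t ∈ s, HasDerivAt v (-ω ^ 2 * u t) t)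
    {t₀ : ℝ} (ht₀ : t₀ ∈ s) (hu₀ : u t₀ = 0) (hv₀ : v t₀ = 0) : s.EqOn u 0 := by
  set E : ℝ → ℝ := fun t ↦ v t ^ 2 + ω ^ 2 * u t ^ 2
  have hE : ∀ t ∈ s, HasDerivAt E 0 t := fun t ht ↦ by
    refine (((hv t ht).pow 2).add (((hu t ht).pow 2).const_mul (ω ^ 2))).congr_deriv ?_
    ring
  intro t ht
  have hEt : E t = 0 := by
    rw [hs.is_const_of_deriv_eq_zero hs'
      (fun t ht ↦ (hE t ht).differentiableAt.differentiableWithinAt)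
      (fun t ht ↦ (hE t ht).deriv) ht ht₀]
    simp [E, hu₀, hv₀]
  have : ω ^ 2 * u t ^ 2 = 0 := by nlinarith [sq_nonneg (v t), sq_nonneg (u t), sq_nonneg ω]
  simpa [hω] using this

theorem hasDerivAt_tsum_mul_pow {c : ℕ → ℝ} {r x : ℝ} (hx : |x| < r)
    (hc : Summable fun n ↦ |c (n + 1)| * (n + 1) * r ^ n) :
    HasDerivAt (fun y ↦ ∑' n, c n * y ^ n) (∑' n, c (n + 1) * (n + 1) * x ^ n) x := by
  have hr : 0 < r := (abs_nonneg x).trans_lt hx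
  have hu : Summable fun n ↦ |c n| * n * r ^ (n - 1) :=
    (summable_nat_add_iff 1).1 (by simpa using hc)
  have hbound : ∀ n y, |y| < r → ‖c n * (n * y ^ (n - 1))‖ ≤ |c n| * n * r ^ (n - 1) :=
    fun n y hy ↦ by
      rw [Real.norm_eq_abs, abs_mul, abs_mul, abs_pow, Nat.abs_cast, ← mul_assoc]
      gcongr
  have key := hasDerivAt_tsum_of_isPreconnected hu Metric.isOpen_ball
    (convex_ball (0 : ℝ) r).isPreconnected (fun n y _ ↦ (hasDerivAt_pow n y).const_mul (c n))
    (fun n y hy ↦ hbound n y (by simpa using hy)) (y₀ := 0) (Metric.mem_ball_self hr)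
    (summable_of_ne_finset_zero (s := {0}) fun n hn ↦ by simp_all) (by simpa using hx)
  rw [(hu.of_norm_bounded fun n ↦ hbound n x hx).tsum_eq_zero_add] at key
  simpa [mul_assoc] using key

theorem summable_abs_mul_descFactorial_mul_pow {c : ℕ → ℝ} (hc : ∀ n, |c n| ≤ 1) (k : ℕ)
    {r : ℝ} (hr₀ : 0 ≤ r) (hr₁ : r < 1) :
    Summable fun n ↦ |c (n + k)| * (n + k).descFactorial k * r ^ n := by
  refine (summable_descFactorial_mul_geometric_of_norm_lt_one k (r := r)
    (by rwa [Real.norm_of_nonneg hr₀])).of_nonneg_of_le (fun n ↦ by positivity) fun n ↦ ?_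
  calc |c (n + k)| * (n + k).descFactorial k * r ^ n
      ≤ 1 * (n + k).descFactorial k * r ^ n := by gcongr; exact hc _
    _ = _ := by rw [one_mul]

theorem hasDerivAt_tsum_mul_pow_of_abs_le_one {c : ℕ → ℝ} (hc : ∀ n, |c n| ≤ 1) {x : ℝ}
    (hx : |x| < 1) :
    HasDerivAt (fun y ↦ ∑' n, c n * y ^ n) (∑' n, c (n + 1) * (n + 1) * x ^ n) x := by
  obtain ⟨r, hxr, hr₁⟩ := exists_between hx
  refine hasDerivAt_tsum_mul_pow hxr ?_
  simpa using summable_abs_mul_descFactorial_mul_pow hc 1 ((abs_nonneg x).trans hxr.le) hr₁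

theorem hasDerivAt_tsum_mul_succ_mul_pow_of_abs_le_one {c : ℕ → ℝ} (hc : ∀ n, |c n| ≤ 1)
    {x : ℝ} (hx : |x| < 1) :
    HasDerivAt (fun y ↦ ∑' n, c (n + 1) * (n + 1) * y ^ n)
      (∑' n, c (n + 2) * (n + 2) * (n + 1) * x ^ n) x := by
  obtain ⟨r, hxr, hr₁⟩ := exists_between hx
  have h := hasDerivAt_tsum_mul_pow (c := fun n ↦ c (n + 1) * (n + 1)) hxr ?_
  · convert h using 3 with n
    push_cast
    ring
  · refine (summable_abs_mul_descFactorial_mul_pow hc 2 ((abs_nonneg x).trans hxr.le)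
      hr₁).congr fun n ↦ ?_
    rw [abs_mul, abs_of_pos (by positivity : (0 : ℝ) < (n + 1 : ℕ) + 1)]
    simp only [Nat.succ_descFactorial_succ, Nat.descFactorial_zero]
    push_cast
    ring

/-- The Taylor coefficients of `x ↦ sin (lam * arcsin x)` at `0`. -/
noncomputable def sinMulArcsinCoeff (lam : ℝ) : ℕ → ℝ
  | 0 => 0
  | 1 => lam
  | n + 2 => sinMulArcsinCoeff lam n * (n ^ 2 - lam ^ 2) / ((n + 2) * (n + 1))

theorem sinMulArcsinCoeff_add_two_mul (lam : ℝ) (n : ℕ) :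
    sinMulArcsinCoeff lam (n + 2) * ((n + 2) * (n + 1)) =
      sinMulArcsinCoeff lam n * (n ^ 2 - lam ^ 2) := by
  rw [sinMulArcsinCoeff, div_mul_cancel₀ _ (by positivity)]

theorem sinMulArcsinCoeff_zero_left : ∀ n, sinMulArcsinCoeff 0 n = 0
  | 0 => rfl
  | 1 => rfl
  | n + 2 => by simp [sinMulArcsinCoeff, sinMulArcsinCoeff_zero_left n]

section sinMulArcsinCoeff

variable {lam : ℝ}

theorem sinMulArcsinCoeff_nonneg (hlam : lam ∈ Icc 0 1) : ∀ n, 0 ≤ sinMulArcsinCoeff lam n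
  | 0 => le_rfl
  | 1 => hlam.1
  | 2 => by simp [sinMulArcsinCoeff]
  | n + 3 => by
    have hsq : lam ^ 2 ≤ ((n + 1 : ℕ) : ℝ) ^ 2 := by
      push_cast
      nlinarith [hlam.1, hlam.2, (n.cast_nonneg : (0 : ℝ) ≤ n)]
    rw [sinMulArcsinCoeff]
    exact div_nonneg (mul_nonneg (sinMulArcsinCoeff_nonneg hlam _) (sub_nonneg.2 hsq))
      (by positivity)

theorem abs_sinMulArcsinCoeff_le_one (hlam : |lam| ≤ 1) : ∀ n, |sinMulArcsinCoeff lam n| ≤ 1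
  | 0 => by simp [sinMulArcsinCoeff]
  | 1 => hlam
  | n + 2 => by
    have hlam2 : lam ^ 2 ≤ 1 := (sq_le_one_iff_abs_le_one lam).2 hlam
    have hn : (0 : ℝ) ≤ n := n.cast_nonneg
    have hfactor : |(n : ℝ) ^ 2 - lam ^ 2| ≤ (n + 2) * (n + 1) :=
      abs_le.2 ⟨by nlinarith [sq_nonneg lam], by nlinarith [sq_nonneg lam]⟩
    rw [sinMulArcsinCoeff, abs_div, abs_mul,
      abs_of_pos (by positivity : (0 : ℝ) < (n + 2) * (n + 1)), div_le_one (by positivity)]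
    exact (mul_le_mul (abs_sinMulArcsinCoeff_le_one hlam n) hfactor (abs_nonneg _)
      zero_le_one).trans_eq (one_mul _)

theorem summable_sinMulArcsinCoeff_mul_pow (hlam : |lam| ≤ 1) {x : ℝ} (hx : |x| < 1) :
    Summable fun n ↦ sinMulArcsinCoeff lam n * x ^ n :=
  (summable_abs_mul_descFactorial_mul_pow (abs_sinMulArcsinCoeff_le_one hlam) 0 (abs_nonneg x)
    hx).of_norm_bounded fun n ↦ by simp

theorem sinMulArcsinCoeff_series_ode (hlam : |lam| ≤ 1) {x : ℝ} (hx : |x| < 1) :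
    (1 - x ^ 2) * ∑' n, sinMulArcsinCoeff lam (n + 2) * (n + 2) * (n + 1) * x ^ n
      - x * ∑' n, sinMulArcsinCoeff lam (n + 1) * (n + 1) * x ^ n
      + lam ^ 2 * ∑' n, sinMulArcsinCoeff lam n * x ^ n = 0 := by
  set b := sinMulArcsinCoeff lam
  have hsummable : ∀ k, Summable fun n ↦ |b (n + k)| * (n + k).descFactorial k * |x| ^ n :=
    fun k ↦ summable_abs_mul_descFactorial_mul_pow (abs_sinMulArcsinCoeff_le_one hlam) k
      (abs_nonneg x) hx
  have hs1 : Summable fun n ↦ b (n + 1) * (n + 1) * x ^ n :=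
    (hsummable 1).of_norm_bounded fun n ↦ by
      simp [abs_of_pos (by positivity : (0 : ℝ) < n + 1)]
  have hs2 : Summable fun n ↦ b (n + 2) * (n + 2) * (n + 1) * x ^ n :=
    (hsummable 2).of_norm_bounded fun n ↦ by
      simp [abs_of_pos (by positivity : (0 : ℝ) < n + 1),
        abs_of_pos (by positivity : (0 : ℝ) < n + 2)]
      exact le_of_eq (by ring)
  have h0 : HasSum (fun n ↦ b n * x ^ n) (∑' n, b n * x ^ n) :=
    (summable_sinMulArcsinCoeff_mul_pow hlam hx).hasSum
  have h1 : HasSum (fun n ↦ b n * n * x ^ n) (x * ∑' n, b (n + 1) * (n + 1) * x ^ n) := by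
    refine (hasSum_nat_add_iff' 1).1 ?_
    rw [Finset.sum_range_one, Nat.cast_zero, mul_zero, zero_mul, sub_zero]
    exact (hs1.hasSum.mul_left x).congr_fun fun n ↦ by push_cast; ring
  have h2 : HasSum (fun n ↦ b n * n * (n - 1) * x ^ n)
      (x ^ 2 * ∑' n, b (n + 2) * (n + 2) * (n + 1) * x ^ n) := by
    refine (hasSum_nat_add_iff' 2).1 ?_
    have hhead : ∑ i ∈ Finset.range 2, b i * i * (i - 1) * x ^ i = 0 := by
      simp [Finset.sum_range_succ]
    rw [hhead, sub_zero]
    exact (hs2.hasSum.mul_left (x ^ 2)).congr_fun fun n ↦ by push_cast; ring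
  have h2' : HasSum (fun n ↦ b n * (n ^ 2 - lam ^ 2) * x ^ n)
      (∑' n, b (n + 2) * (n + 2) * (n + 1) * x ^ n) :=
    hs2.hasSum.congr_fun fun n ↦ by
      linear_combination (-x ^ n) * sinMulArcsinCoeff_add_two_mul lam n
  have hzero := ((h2'.sub h2).sub h1).add (h0.mul_left (lam ^ 2))
  have hterms : (fun n ↦ b n * (n ^ 2 - lam ^ 2) * x ^ n - b n * n * (n - 1) * x ^ n
      - b n * n * x ^ n + lam ^ 2 * (b n * x ^ n)) = 0 := by
    ext n; simp only [Pi.zero_apply]; ring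
  rw [hterms] at hzero
  linear_combination -hasSum_zero.unique hzero

theorem hasSum_sinMulArcsinCoeff_mul_pow (hlam : |lam| ≤ 1) {x : ℝ} (hx : |x| < 1) :
    HasSum (fun n ↦ sinMulArcsinCoeff lam n * x ^ n) (sin (lam * arcsin x)) := by
  rcases eq_or_ne lam 0 with rfl | hlam0
  · simp [sinMulArcsinCoeff_zero_left]
  refine (summable_sinMulArcsinCoeff_mul_pow hlam hx).hasSum_iff.2 ?_
  set b := sinMulArcsinCoeff lam
  have hb : ∀ n, |b n| ≤ 1 := abs_sinMulArcsinCoeff_le_one hlam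
  set s : Set ℝ := Ioo (-(π / 2)) (π / 2)
  have hsin : ∀ θ ∈ s, |sin θ| < 1 := fun θ hθ ↦ by
    rw [← sq_lt_one_iff_abs_lt_one, sin_sq]
    linarith [pow_pos (cos_pos_of_mem_Ioo hθ) 2]
  set u : ℝ → ℝ := fun θ ↦ ∑' n, b n * sin θ ^ n - sin (lam * θ)
  set v : ℝ → ℝ := fun θ ↦
    (∑' n, b (n + 1) * (n + 1) * sin θ ^ n) * cos θ - lam * cos (lam * θ)
  have hlin : ∀ θ, HasDerivAt (fun t ↦ lam * t) lam θ := fun θ ↦ by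
    simpa using (hasDerivAt_id θ).const_mul lam
  have hu : ∀ θ ∈ s, HasDerivAt u (v θ) θ := fun θ hθ ↦ by
    have h := ((hasDerivAt_tsum_mul_pow_of_abs_le_one hb (hsin θ hθ)).comp θ
      (hasDerivAt_sin θ)).sub ((hasDerivAt_sin (lam * θ)).comp θ (hlin θ))
    exact h.congr_deriv (by simp only [v]; ring)
  have hv : ∀ θ ∈ s, HasDerivAt v (-lam ^ 2 * u θ) θ := fun θ hθ ↦ by
    have h := (((hasDerivAt_tsum_mul_succ_mul_pow_of_abs_le_one hb (hsin θ hθ)).comp θ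
      (hasDerivAt_sin θ)).mul (hasDerivAt_cos θ)).sub
      (((hasDerivAt_cos (lam * θ)).comp θ (hlin θ)).const_mul lam)
    refine h.congr_deriv ?_
    simp only [u, Function.comp_def]
    linear_combination sinMulArcsinCoeff_series_ode hlam (hsin θ hθ) +
      (∑' n, b (n + 2) * (n + 2) * (n + 1) * sin θ ^ n) * sin_sq_add_cos_sq θ
  have htsum_zero : ∀ c : ℕ → ℝ, ∑' n, c n * (0 : ℝ) ^ n = c 0 := fun c ↦ by
    rw [tsum_eq_single 0 fun n hn ↦ by simp [hn]]
    simp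
  rw [abs_lt] at hx
  have harcsin : arcsin x ∈ s :=
    ⟨neg_pi_div_two_lt_arcsin.2 hx.1, arcsin_lt_pi_div_two.2 hx.2⟩
  have h := eqOn_zero_of_hasDerivAt_of_hasDerivAt_neg_sq_mul isOpen_Ioo isPreconnected_Ioo hlam0
    hu hv (t₀ := 0) (by simp [pi_pos]) (by simp [u, htsum_zero, b, sinMulArcsinCoeff])
    (by simp [v, htsum_zero, b, sinMulArcsinCoeff]) harcsin
  simpa [u, sin_arcsin hx.1.le hx.2.le, sub_eq_zero] using h

end sinMulArcsinCoeff

theorem entrywise_sin_lambda_arcsin_add_identity_posSemidef_general (n : ℕ)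
    (lam : ℝ) (hlam : lam ∈ Set.Icc (0 : ℝ) 1)
    (X : Matrix (Fin n) (Fin n) ℝ) (hX : X.PosSemidef) (hXd : ∀ i, X i i = 1) :
    ((Matrix.of fun i j => Real.sin (lam * Real.arcsin (X i j)))
      + (1 - Real.sin (Real.pi * lam / 2)) • (1 : Matrix (Fin n) (Fin n) ℝ)).PosSemidef := by
  have hentries : ∀ i j, |X i j| ≤ 1 := fun i j ↦
    (sq_le_one_iff_abs_le_one _).1 (by simpa [hXd] using hX.sq_apply_le_mul i j)
  have hf : (X.map fun x ↦ sin (lam * arcsin x)).PosSemidef :=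
    hX.map_of_hasSum_of_continuousOn hentries (sinMulArcsinCoeff_nonneg hlam)
      (fun _ ↦ hasSum_sinMulArcsinCoeff_mul_pow (abs_le.2 ⟨by linarith [hlam.1], hlam.2⟩))
      (by fun_prop)
  exact hf.add (Matrix.PosSemidef.one.smul (sub_nonneg.2 (sin_le_one _)))

/-- For `λ ∈ [0,1]` and `X ∈ SR` (symmetric PSD with unit diagonal),
the matrix `f_λ(X) + (1 - sin (π λ / 2)) • I` is positive semidefinite, where
`f_λ(X)` has entries `sin (λ * arcsin (X i j))`. -/
theorem entrywise_sin_lambda_arcsin_add_identity_posSemidef (n : ℕ) (hn : 0 < n)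
    (lam : ℝ) (hlam : lam ∈ Set.Icc (0 : ℝ) 1)
    (X : Matrix (Fin n) (Fin n) ℝ) (hX : X.PosSemidef) (hXd : ∀ i, X i i = 1) :
    ((Matrix.of fun i j => Real.sin (lam * Real.arcsin (X i j)))
      + (1 - Real.sin (Real.pi * lam / 2)) • (1 : Matrix (Fin n) (Fin n) ℝ)).PosSemidef :=
  entrywise_sin_lambda_arcsin_add_identity_posSemidef_general n lam hlam X hX hXd
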